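/- Let M, B be finitely-valued random variables, let Y = (Y_1,…,Y_m) be a tuple of random variables each taking values in a finite set of cardinality d, let s ⊆ {1,…,m} with |s| = r ≤ m, and set Z = (Y_i)_{i∈s}. Assume B = g(Y) for some function g and I(M ; Z) = 0. Then I(M ; B) ≤ (m − r) · log d. -/

import Mathlib

open Finset

/-- Probability that the finitely-valued random variable `X` takes value `x`,
with respect to the probability mass function `p` on the finite sample space `Ω`. -/
noncomputable def pmfProb {Ω : Type*} [Fintype Ω] {α : Type*} [Fintype α] [DecidableEq α]
    (p : Ω → ℝ) (X : Ω → α) (x : α) : ℝ :=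
  ∑ ω, if X ω = x then p ω else 0

/-- Shannon entropy (natural logarithm) of the random variable `X`. -/
noncomputable def entH {Ω : Type*} [Fintype Ω] {α : Type*} [Fintype α] [DecidableEq α]
    (p : Ω → ℝ) (X : Ω → α) : ℝ :=
  ∑ x, Real.negMulLog (pmfProb p X x)

/-- Conditional Shannon entropy `H(X|Y) = H(X,Y) - H(Y)`. -/
noncomputable def condH {Ω : Type*} [Fintype Ω] {α β : Type*} [Fintype α] [DecidableEq α]
    [Fintype β] [DecidableEq β] (p : Ω → ℝ) (X : Ω → α) (Y : Ω → β) : ℝ :=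
  entH p (fun ω => (X ω, Y ω)) - entH p Y

/-- Mutual information `I(X;Y) = H(X) + H(Y) - H(X,Y)`. -/
noncomputable def mutInfo {Ω : Type*} [Fintype Ω] {α β : Type*} [Fintype α] [DecidableEq α]
    [Fintype β] [DecidableEq β] (p : Ω → ℝ) (X : Ω → α) (Y : Ω → β) : ℝ :=
  entH p X + entH p Y - entH p (fun ω => (X ω, Y ω))

/-- The conditional probability mass function given an event `E`. -/
noncomputable def condPMF {Ω : Type*} [Fintype Ω] (p : Ω → ℝ) (E : Ω → Prop)
    [DecidablePred E] : Ω → ℝ :=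
  fun ω => if E ω then p ω / (∑ ω' ∈ Finset.univ.filter E, p ω') else 0


/-! Write `B = h(Z, W)`, where `W` collects the coordinates of `Y` outside `s`. Data
processing gives `I(M;B) ≤ I(M;Z,W)`, and `I(M;Z,W) ≤ I(M;Z) + H(W) = H(W) ≤ log d ^ (m - r)`.
All these entropy inequalities come from submodularity `H(X,Y,Z) + H(Z) ≤ H(X,Z) + H(Y,Z)`.
It is subadditivity `H(X,Y) ≤ H(X) + H(Y)` summed over the fibres `{Z = z}`, each carrying the
restriction of `p`, so subadditivity must hold for arbitrary nonnegative weights; it follows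
from Gibbs' inequality. -/

namespace Real

lemma mul_log_le_mul_log_add_sub {x y : ℝ} (hx : 0 ≤ x) (hy : 0 ≤ y) (hxy : 0 < x → 0 < y) :
    x * log y ≤ x * log x + y - x := by
  rcases hx.eq_or_lt with rfl | hx
  · simpa using hy
  have hy := hxy hx
  have h := mul_le_mul_of_nonneg_left (log_le_sub_one_of_pos (div_pos hy hx)) hx.le
  rw [log_div hy.ne' hx.ne', mul_sub, mul_sub, mul_div_cancel₀ _ hx.ne'] at h
  linarith

theorem sum_mul_log_le_sum_mul_log {ι : Type*} (s : Finset ι) {q r : ι → ℝ}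
    (hq : ∀ i ∈ s, 0 ≤ q i) (hr : ∀ i ∈ s, 0 ≤ r i) (hqr : ∀ i ∈ s, 0 < q i → 0 < r i)
    (hsum : ∑ i ∈ s, r i ≤ ∑ i ∈ s, q i) :
    ∑ i ∈ s, q i * log (r i) ≤ ∑ i ∈ s, q i * log (q i) :=
  calc ∑ i ∈ s, q i * log (r i) ≤ ∑ i ∈ s, (q i * log (q i) + r i - q i) :=
        sum_le_sum fun i hi => mul_log_le_mul_log_add_sub (hq i hi) (hr i hi) (hqr i hi)
    _ = ∑ i ∈ s, q i * log (q i) + (∑ i ∈ s, r i - ∑ i ∈ s, q i) := by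
        rw [sum_sub_distrib, sum_add_distrib]; ring
    _ ≤ ∑ i ∈ s, q i * log (q i) := by linarith

theorem sum_negMulLog_add_negMulLog_sum_le {α β : Type*} [Fintype α] [Fintype β]
    (q : α → β → ℝ) (hq : ∀ x y, 0 ≤ q x y) :
    ∑ x, ∑ y, negMulLog (q x y) + negMulLog (∑ x, ∑ y, q x y)
      ≤ ∑ x, negMulLog (∑ y, q x y) + ∑ y, negMulLog (∑ x, q x y) := by
  set a := fun x => ∑ y, q x y
  set b := fun y => ∑ x, q x y
  set S := ∑ x, a x
  have hb_sum : ∑ y, b y = S := sum_comm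
  have ha x : 0 ≤ a x := sum_nonneg fun y _ => hq x y
  have hb y : 0 ≤ b y := sum_nonneg fun x _ => hq x y
  have hS : 0 ≤ S := sum_nonneg fun x _ => ha x
  have hpos {x y} (h : 0 < q x y) : 0 < a x ∧ 0 < b y ∧ 0 < S :=
    have hqa : q x y ≤ a x := single_le_sum (fun y _ => hq x y) (mem_univ y)
    ⟨h.trans_le hqa, h.trans_le (single_le_sum (fun x _ => hq x y) (mem_univ x)),
      h.trans_le (hqa.trans (single_le_sum (fun x _ => ha x) (mem_univ x)))⟩
  have hlog x y : q x y * log (a x * b y / S)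
      = q x y * log (a x) + q x y * log (b y) - q x y * log S := by
    rcases (hq x y).eq_or_lt with h | h
    · simp [← h]
    obtain ⟨ha, hb, hS⟩ := hpos h
    rw [log_div (by positivity) hS.ne', log_mul ha.ne' hb.ne']
    ring
  -- Gibbs' inequality against the product of the marginals, rescaled to total mass `S`
  have gibbs := sum_mul_log_le_sum_mul_log univ (q := fun i : α × β => q i.1 i.2)
    (r := fun i => a i.1 * b i.2 / S) (fun i _ => hq _ _)
    (fun i _ => by have := ha i.1; have := hb i.2; positivity)
    (fun i _ h => by obtain ⟨ha, hb, hS⟩ := hpos h; positivity)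
    (by
      simp only [Fintype.sum_prod_type, ← sum_div, ← mul_sum, ← sum_mul, hb_sum]
      exact (mul_self_div_self S).le)
  simp only [Fintype.sum_prod_type, hlog, sum_sub_distrib, sum_add_distrib, ← sum_mul] at gibbs
  rw [sum_comm (f := fun x y => q x y * log (b y))] at gibbs
  simp only [← sum_mul] at gibbs
  simp only [negMulLog, neg_mul, sum_neg_distrib]
  linarith

end Real

section Entropy

variable {Ω α β γ : Type*} [Fintype Ω] [Fintype α] [DecidableEq α] [Fintype β] [DecidableEq β]
  [Fintype γ] [DecidableEq γ]

lemma pmfProb_nonneg {p : Ω → ℝ} (hp : ∀ ω, 0 ≤ p ω) (X : Ω → α) (x : α) :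
    0 ≤ pmfProb p X x :=
  sum_nonneg fun ω _ => by split_ifs <;> simp [hp]

lemma sum_pmfProb (p : Ω → ℝ) (X : Ω → α) : ∑ x, pmfProb p X x = ∑ ω, p ω := by
  simp only [pmfProb]
  rw [sum_comm]
  simp

lemma sum_pmfProb_pair_right (p : Ω → ℝ) (X : Ω → α) (Y : Ω → β) (x : α) :
    ∑ y, pmfProb p (fun ω => (X ω, Y ω)) (x, y) = pmfProb p X x := by
  simp only [pmfProb, Prod.mk.injEq, ite_and]
  rw [sum_comm]
  simp

lemma sum_pmfProb_pair_left (p : Ω → ℝ) (X : Ω → α) (Y : Ω → β) (y : β) :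
    ∑ x, pmfProb p (fun ω => (X ω, Y ω)) (x, y) = pmfProb p Y y := by
  simp only [pmfProb, Prod.mk.injEq, ite_and]
  rw [sum_comm]
  simp

lemma pmfProb_comp_of_injective (p : Ω → ℝ) {e : α → β} (he : Function.Injective e)
    (X : Ω → α) (x : α) : pmfProb p (fun ω => e (X ω)) (e x) = pmfProb p X x := by
  simp only [pmfProb, he.eq_iff]

lemma entH_comp_of_injective (p : Ω → ℝ) {e : α → β} (he : Function.Injective e)
    (X : Ω → α) : entH p (fun ω => e (X ω)) = entH p X := by
  refine (Fintype.sum_of_injective e he _ _ (fun y hy => ?_) fun x => ?_).symm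
  · unfold pmfProb
    rw [sum_eq_zero fun ω _ => if_neg fun h => hy ⟨X ω, h⟩, Real.negMulLog_zero]
  · rw [pmfProb_comp_of_injective p he]

lemma entH_pair_comp (p : Ω → ℝ) (X : Ω → α) (f : α → β) :
    entH p (fun ω => (X ω, f (X ω))) = entH p X :=
  entH_comp_of_injective p (e := fun x => (x, f x)) (fun _ _ h => congrArg Prod.fst h) X

lemma entH_pair_add_negMulLog_le {p : Ω → ℝ} (hp : ∀ ω, 0 ≤ p ω) (X : Ω → α) (Y : Ω → β) :
    entH p (fun ω => (X ω, Y ω)) + Real.negMulLog (∑ ω, p ω) ≤ entH p X + entH p Y := by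
  have h := Real.sum_negMulLog_add_negMulLog_sum_le
    (fun x y => pmfProb p (fun ω => (X ω, Y ω)) (x, y)) fun x y => pmfProb_nonneg hp _ _
  simp only [sum_pmfProb_pair_right, sum_pmfProb_pair_left, sum_pmfProb] at h
  simpa only [entH, Fintype.sum_prod_type] using h

lemma pmfProb_restrict (p : Ω → ℝ) (X : Ω → α) (Z : Ω → γ) (x : α) (z : γ) :
    pmfProb (fun ω => if Z ω = z then p ω else 0) X x
      = pmfProb p (fun ω => (X ω, Z ω)) (x, z) := by
  simp only [pmfProb, Prod.mk.injEq, ite_and]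

lemma entH_pair_eq_sum_entH_restrict (p : Ω → ℝ) (X : Ω → α) (Z : Ω → γ) :
    entH p (fun ω => (X ω, Z ω)) = ∑ z, entH (fun ω => if Z ω = z then p ω else 0) X := by
  simp only [entH, pmfProb_restrict, Fintype.sum_prod_type]
  exact sum_comm

theorem entH_submodular {p : Ω → ℝ} (hp : ∀ ω, 0 ≤ p ω) (X : Ω → α) (Y : Ω → β)
    (Z : Ω → γ) :
    entH p (fun ω => ((X ω, Y ω), Z ω)) + entH p Z
      ≤ entH p (fun ω => (X ω, Z ω)) + entH p (fun ω => (Y ω, Z ω)) := by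
  have h := sum_le_sum fun z (_ : z ∈ univ) =>
    entH_pair_add_negMulLog_le (p := fun ω => if Z ω = z then p ω else 0)
      (fun ω => by split_ifs <;> simp [hp]) X Y
  simp only [sum_add_distrib, ← entH_pair_eq_sum_entH_restrict] at h
  exact h

lemma entH_comp_le {p : Ω → ℝ} (hp : ∀ ω, 0 ≤ p ω) (X : Ω → α) (f : α → β) :
    entH p (fun ω => f (X ω)) ≤ entH p X := by
  have h := entH_submodular hp X X (fun ω => f (X ω))
  have hXX : entH p (fun ω => ((X ω, X ω), f (X ω))) = entH p X :=
    entH_comp_of_injective p (e := fun x => ((x, x), f x)) (fun _ _ h => congrArg (·.1.1) h) X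
  rw [hXX, entH_pair_comp] at h
  linarith

theorem entH_le_log_card {p : Ω → ℝ} (hp : ∀ ω, 0 ≤ p ω) (hp1 : ∑ ω, p ω = 1) (X : Ω → α) :
    entH p X ≤ Real.log (Fintype.card α) := by
  rcases isEmpty_or_nonempty α with hα | hα
  · simp [entH]
  have hn : (0 : ℝ) < Fintype.card α := by exact_mod_cast Fintype.card_pos
  have h := Real.concaveOn_negMulLog.le_map_sum (t := univ)
    (w := fun _ => (Fintype.card α : ℝ)⁻¹) (p := pmfProb p X) (fun _ _ => by positivity)
    (by simp [hn.ne']) fun x _ => pmfProb_nonneg hp X x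
  simp only [smul_eq_mul, ← mul_sum, sum_pmfProb, hp1, mul_one] at h
  rw [Real.negMulLog, Real.log_inv, neg_mul_neg] at h
  exact le_of_mul_le_mul_left h (inv_pos.2 hn)

theorem mutInfo_comp_le {p : Ω → ℝ} (hp : ∀ ω, 0 ≤ p ω) (M : Ω → γ) (V : Ω → α)
    (f : α → β) : mutInfo p M (fun ω => f (V ω)) ≤ mutInfo p M V := by
  have h := entH_submodular hp M V (fun ω => f (V ω))
  rw [entH_pair_comp p (fun ω => (M ω, V ω)) (fun v => f v.2), entH_pair_comp] at h
  unfold mutInfo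
  linarith

theorem mutInfo_pair_le_mutInfo_add_entH {p : Ω → ℝ} (hp : ∀ ω, 0 ≤ p ω) (hp1 : ∑ ω, p ω = 1)
    (M : Ω → γ) (Z : Ω → α) (W : Ω → β) :
    mutInfo p M (fun ω => (Z ω, W ω)) ≤ mutInfo p M Z + entH p W := by
  have hZW := entH_pair_add_negMulLog_le hp Z W
  rw [hp1, Real.negMulLog_one] at hZW
  have hMZ := entH_comp_le hp (fun ω => (M ω, (Z ω, W ω))) fun t => (t.1, t.2.1)
  unfold mutInfo
  linarith

end Entropy

theorem cut_set_bound_general {Ω α β μ : Type*} [Fintype Ω] [Fintype α] [DecidableEq α]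
    [Fintype β] [DecidableEq β] [Fintype μ] [DecidableEq μ]
    (p : Ω → ℝ) (hp : ∀ ω, 0 ≤ p ω) (hp1 : ∑ ω, p ω = 1)
    (m r d : ℕ) (hα : Fintype.card α = d)
    (Y : Fin m → Ω → α) (M : Ω → μ) (B : Ω → β)
    (s : Finset (Fin m)) (hs : s.card = r)
    (g : (Fin m → α) → β) (hB : ∀ ω, B ω = g (fun i => Y i ω))
    (hI : mutInfo p M (fun ω (e : ↥s) => Y e.1 ω) = 0) :
    mutInfo p M B ≤ ((m : ℝ) - (r : ℝ)) * Real.log d := by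
  set Z : Ω → (s → α) := fun ω e => Y e.1 ω
  set W : Ω → (↥sᶜ → α) := fun ω e => Y e.1 ω
  let glue : (s → α) × (↥sᶜ → α) → β := fun zw =>
    g fun i => if hi : i ∈ s then zw.1 ⟨i, hi⟩ else zw.2 ⟨i, mem_compl.2 hi⟩
  have hB_glue : B = fun ω => glue (Z ω, W ω) := by
    funext ω
    simp [hB, glue, Z, W]
  have hcompl : ((sᶜ).card : ℝ) = m - r := by
    rw [← hs, eq_sub_iff_add_eq, ← Nat.cast_add, card_compl_add_card, Fintype.card_fin]
  calc mutInfo p M B ≤ mutInfo p M (fun ω => (Z ω, W ω)) :=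
        hB_glue ▸ mutInfo_comp_le hp M _ glue
    _ ≤ mutInfo p M Z + entH p W := mutInfo_pair_le_mutInfo_add_entH hp hp1 M Z W
    _ = entH p W := by rw [hI, zero_add]
    _ ≤ Real.log (Fintype.card (↥sᶜ → α)) := entH_le_log_card hp hp1 W
    _ = ((m : ℝ) - r) * Real.log d := by
        rw [Fintype.card_fun, Fintype.card_coe, hα, Nat.cast_pow, Real.log_pow, hcompl]

/-- cut-set bound for the r-wiretap network: if `B = g(Y)` for the tuple
`Y = (Y 1, …, Y m)` of variables over an alphabet of size `d`, `s` is an `r`-element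
subset of the cut, `Z = (Y i)_{i ∈ s}` are the eavesdropped variables, and
`I(M ; Z) = 0`, then `I(M ; B) ≤ (m - r) * log d`. -/
theorem cut_set_bound {Ω α β μ : Type*} [Fintype Ω] [Fintype α] [DecidableEq α]
    [Fintype β] [DecidableEq β] [Fintype μ] [DecidableEq μ]
    (p : Ω → ℝ) (hp : ∀ ω, 0 ≤ p ω) (hp1 : ∑ ω, p ω = 1)
    (m r d : ℕ) (hrm : r ≤ m) (hα : Fintype.card α = d)
    (Y : Fin m → Ω → α) (M : Ω → μ) (B : Ω → β)
    (s : Finset (Fin m)) (hs : s.card = r)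
    (g : (Fin m → α) → β) (hB : ∀ ω, B ω = g (fun i => Y i ω))
    (hI : mutInfo p M (fun ω (e : ↥s) => Y e.1 ω) = 0) :
    mutInfo p M B ≤ ((m : ℝ) - (r : ℝ)) * Real.log d :=
  cut_set_bound_general p hp hp1 m r d hα Y M B s hs g hB hI
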